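/- Let Kx† = y† and ‖y^δ − y†‖ ≤ δ, and assume the source condition: there exist w ∈ H and ξ ∈ ∂‖·‖_{ℓ¹}(x†) (i.e., ξ_i = sign(x†_i) when x†_i ≠ 0 and ξ_i ∈ [−1,1] otherwise) such that K*w = x† + ηξ for some η > 0. Then the minimizer x_{α,β}^δ of Φ_{α,β} with α = ηβ satisfies ‖Kx_{α,β}^δ − y^δ‖ ≤ δ + 2β‖w‖ and ‖x_{α,β}^δ − x†‖_{ℓ²} ≤ δ/√β + √β‖w‖. -/

import Mathlib

noncomputable section

open Filter Topology

/-- `ℓ²(ℕ, ℝ)`. -/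
abbrev ltwo : Type := lp (fun _ : ℕ => ℝ) 2

/-- `x ∈ ℓ¹`. -/
def inL1 (x : ltwo) : Prop := Memℓp (fun i => x i) 1

/-- The `ℓ¹`-norm `‖x‖_{ℓ¹} = ∑ |xᵢ|` (junk value if `x ∉ ℓ¹`). -/
noncomputable def l1norm (x : ltwo) : ℝ := ∑' i, |x i|

/-- The elastic-net functional `Φ_{α,β}(x) = ½‖Kx − y‖² + α‖x‖₁ + (β/2)‖x‖₂²`,
real-valued on its effective domain `ℓ¹ ∩ ℓ²` (the convention `Φ = +∞` off `ℓ¹` is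
implemented by restricting all statements to `inL1`). -/
noncomputable def Phi {H : Type*} [NormedAddCommGroup H] [InnerProductSpace ℝ H]
    (K : ltwo →L[ℝ] H) (y : H) (α β : ℝ) (x : ltwo) : ℝ :=
  (1 / 2) * ‖K x - y‖ ^ 2 + α * l1norm x + (β / 2) * ‖x‖ ^ 2

/-- `x` is a minimizer of `Φ_{α,β}` over `ℓ²` (with the `+∞` convention off `ℓ¹`). -/
def IsMinimizer {H : Type*} [NormedAddCommGroup H] [InnerProductSpace ℝ H]
    (K : ltwo →L[ℝ] H) (y : H) (α β : ℝ) (x : ltwo) : Prop :=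
  inL1 x ∧ ∀ z : ltwo, inL1 z → Phi K y α β x ≤ Phi K y α β z

/-!
Write `a = ‖Kx − y^δ‖`, `d = ‖x − x†‖`. Comparing `Φ(x) ≤ Φ(x†)`, bounding
`‖x‖₁ ≥ ‖x†‖₁ + ⟨ξ, x − x†⟩` by the subgradient inequality and expanding
`‖x‖² = ‖x†‖² + 2⟨x†, x − x†⟩ + d²`, the choice `α = ηβ` collects the linear terms into
`β ⟨x† + ηξ, x − x†⟩ = β ⟨w, K(x − x†)⟩ ≥ −β‖w‖(a + δ)`. Hence
`a² + βd² ≤ δ² + 2β‖w‖(a + δ)`, i.e. `(a − β‖w‖)² + βd² ≤ (δ + β‖w‖)²`,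
which gives both rates.
-/

theorem Real.sign_mul_self_eq_abs (t : ℝ) : Real.sign t * t = |t| := by
  rcases lt_trichotomy t 0 with h | rfl | h
  · rw [Real.sign_of_neg h, abs_of_neg h, neg_one_mul]
  · simp
  · rw [Real.sign_of_pos h, abs_of_pos h, one_mul]

section SubgradientL1

variable {ι : Type*} {u v ξ : ι → ℝ}

theorem summable_mul_of_abs_le_one (hξ : ∀ i, |ξ i| ≤ 1) (hu : Summable fun i => |u i|) :
    Summable fun i => ξ i * u i :=
  hu.of_norm_bounded fun i => by
    rw [Real.norm_eq_abs, abs_mul]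
    exact mul_le_of_le_one_left (abs_nonneg _) (hξ i)

theorem summable_abs_sub (hu : Summable fun i => |u i|) (hv : Summable fun i => |v i|) :
    Summable fun i => |u i - v i| :=
  (hu.add hv).of_nonneg_of_le (fun _ => abs_nonneg _) fun _ => abs_sub _ _

theorem tsum_abs_add_tsum_mul_sub_le (hu : Summable fun i => |u i|)
    (hv : Summable fun i => |v i|) (hξ_sign : ∀ i, v i ≠ 0 → ξ i = Real.sign (v i))
    (hξ : ∀ i, |ξ i| ≤ 1) :
    ∑' i, |v i| + ∑' i, ξ i * (u i - v i) ≤ ∑' i, |u i| := by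
  have hξuv := summable_mul_of_abs_le_one hξ (summable_abs_sub hu hv)
  rw [← hv.tsum_add hξuv]
  refine (hv.add hξuv).tsum_le_tsum (fun i => ?_) hu
  have hξu : ξ i * u i ≤ |u i| :=
    (le_abs_self _).trans <| by
      rw [abs_mul]; exact mul_le_of_le_one_left (abs_nonneg _) (hξ i)
  have hξv : |v i| = ξ i * v i := by
    by_cases h : v i = 0
    · simp [h]
    · rw [hξ_sign i h, Real.sign_mul_self_eq_abs]
  linarith

end SubgradientL1

theorem inL1.summable_abs {x : ltwo} (hx : inL1 x) : Summable fun i => |x i| := by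
  simpa using hx.summable (p := 1) (by norm_num)

theorem lp.real_inner_eq_of_apply_eq_add_mul {ι : Type*} {z u h : lp (fun _ : ι => ℝ) 2} {η : ℝ}
    {ξ : ι → ℝ} (hz : ∀ i, z i = u i + η * ξ i) (hξh : Summable fun i => ξ i * h i) :
    inner ℝ z h = η * ∑' i, ξ i * h i + inner ℝ u h := by
  rw [lp.inner_eq_tsum, lp.inner_eq_tsum, ← tsum_mul_left,
    ← (hξh.mul_left η).tsum_add (lp.summable_inner u h)]
  refine tsum_congr fun i => ?_
  simp only [RCLike.inner_apply', conj_trivial, hz]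
  ring

/-- Comparison of `Φ(x)` with `Φ(x†)`; `s` is `⟨ξ, x − x†⟩` for a subgradient `ξ` of `‖·‖₁` at `x†`. -/
theorem IsMinimizer.basic_estimate {H : Type*} [NormedAddCommGroup H] [InnerProductSpace ℝ H]
    {K : ltwo →L[ℝ] H} {y : H} {α β s : ℝ} {x xdag : ltwo} (hx : IsMinimizer K y α β x)
    (hxdag : inL1 xdag) (hα : 0 ≤ α) (hs : l1norm xdag + s ≤ l1norm x) :
    (1 / 2) * ‖K x - y‖ ^ 2 + (β / 2) * ‖x - xdag‖ ^ 2 + α * s + β * inner ℝ xdag (x - xdag)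
      ≤ (1 / 2) * ‖K xdag - y‖ ^ 2 := by
  have hmin := hx.2 xdag hxdag
  have hexpand : ‖x‖ ^ 2 = ‖xdag‖ ^ 2 + 2 * inner ℝ xdag (x - xdag) + ‖x - xdag‖ ^ 2 := by
    simpa using norm_add_sq_real xdag (x - xdag)
  unfold Phi at hmin
  rw [hexpand] at hmin
  linarith [mul_le_mul_of_nonneg_left hs hα]

theorem rates_of_sq_add_mul_sq_le {a d δ c β : ℝ} (hδ : 0 ≤ δ) (hc : 0 ≤ c) (hβ : 0 < β)
    (h : a ^ 2 + β * d ^ 2 ≤ δ ^ 2 + 2 * β * c * (a + δ)) :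
    a ≤ δ + 2 * β * c ∧ d ≤ δ / √β + √β * c := by
  have hsq : (a - β * c) ^ 2 + (√β * d) ^ 2 ≤ (δ + β * c) ^ 2 := by
    rw [mul_pow, Real.sq_sqrt hβ.le]; linarith
  have hr : 0 ≤ δ + β * c := by positivity
  have hsqrt : 0 < √β := Real.sqrt_pos.2 hβ
  constructor
  · have := le_of_sq_le_sq ((le_add_of_nonneg_right (sq_nonneg _)).trans hsq) hr
    linarith
  · have hd : √β * d ≤ δ + β * c := le_of_sq_le_sq ((le_add_of_nonneg_left (sq_nonneg _)).trans hsq) hr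
    have hsplit : δ / √β + √β * c = (δ + β * c) / √β := by
      field_simp; rw [Real.sq_sqrt hβ.le]; ring
    rw [hsplit, le_div_iff₀ hsqrt, mul_comm]
    exact hd

/-- A priori convergence rate under the source condition
`K*w = x† + ηξ`, `ξ ∈ ∂‖·‖₁(x†)`: for `α = ηβ` the elastic-net minimizer satisfies
`‖Kx_{α,β}^δ − y^δ‖ ≤ δ + 2β‖w‖` and `‖x_{α,β}^δ − x†‖₂ ≤ δ/√β + √β‖w‖`. -/
theorem elasticNet_convergence_rate_a_priori
    {H : Type*} [NormedAddCommGroup H] [InnerProductSpace ℝ H] [CompleteSpace H]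
    (K : ltwo →L[ℝ] H) (ydag ydelta : H) (δ : ℝ)
    (xdag : ltwo) (hxdag1 : inL1 xdag) (hKxdag : K xdag = ydag)
    (hnoise : ‖ydelta - ydag‖ ≤ δ)
    (η : ℝ) (hη : 0 < η) (w : H) (ξ : ℕ → ℝ)
    (hξ1 : ∀ i, xdag i ≠ 0 → ξ i = Real.sign (xdag i))
    (hξ2 : ∀ i, |ξ i| ≤ 1)
    (hsource : ∀ i, (ContinuousLinearMap.adjoint K w) i = xdag i + η * ξ i)
    (β : ℝ) (hβ : 0 < β)
    (x : ltwo) (hx : IsMinimizer K ydelta (η * β) β x) :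
    ‖K x - ydelta‖ ≤ δ + 2 * β * ‖w‖ ∧
      ‖x - xdag‖ ≤ δ / Real.sqrt β + Real.sqrt β * ‖w‖ := by
  have hξx : Summable fun i => ξ i * (x i - xdag i) :=
    summable_mul_of_abs_le_one hξ2 (summable_abs_sub hx.1.summable_abs hxdag1.summable_abs)
  have hbasic := hx.basic_estimate hxdag1 (by positivity) <|
    tsum_abs_add_tsum_mul_sub_le hx.1.summable_abs hxdag1.summable_abs hξ1 hξ2
  have hsrc : η * ∑' i, ξ i * (x i - xdag i) + inner ℝ xdag (x - xdag)
      = inner ℝ w (K (x - xdag)) := by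
    rw [← ContinuousLinearMap.adjoint_inner_left, lp.real_inner_eq_of_apply_eq_add_mul hsource]
    · simp only [lp.coeFn_sub, Pi.sub_apply]
    · simpa only [lp.coeFn_sub, Pi.sub_apply] using hξx
  have hKdiff : ‖K (x - xdag)‖ ≤ ‖K x - ydelta‖ + δ := by
    rw [map_sub, hKxdag, ← sub_add_sub_cancel _ ydelta]
    exact (norm_add_le _ _).trans (by gcongr)
  have hinner : -(‖w‖ * (‖K x - ydelta‖ + δ)) ≤ inner ℝ w (K (x - xdag)) :=
    calc -(‖w‖ * (‖K x - ydelta‖ + δ)) ≤ -(‖w‖ * ‖K (x - xdag)‖) := by gcongr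
      _ ≤ inner ℝ w (K (x - xdag)) := neg_le_of_abs_le (abs_real_inner_le_norm _ _)
  have hdata : ‖K xdag - ydelta‖ ≤ δ := by rwa [hKxdag, norm_sub_rev]
  refine rates_of_sq_add_mul_sq_le ((norm_nonneg _).trans hnoise) (norm_nonneg w) hβ ?_
  nlinarith [mul_le_mul_of_nonneg_left hinner hβ.le, pow_le_pow_left₀ (norm_nonneg _) hdata 2]
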